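/- Let f : (k+1)^E → ℝ≥0 be monotone and k-submodular. Suppose s⁰ ⪯ s¹ ⪯ ⋯ ⪯ s^p and o⁰, o¹, …, o^p are sequences in (k+1)^E such that s^j = s^{j-1} ⊔ I_{[e^j, i^j]} with e^j ∉ P(s^{j-1}), o^j = (o^{j-1} ⊔ I_{[e^j,i^j]}) ⊔ I_{[e^j,i^j]}, s^{j-1} ⪯ o^{j-1} ⊔ I_{[e^j,i^j]}, s^{j-1} ⪯ o^{j-1}, and i^j maximizes Δ_{e^j,·} f(s^{j-1}). Then for each j ∈ [p], f(o^{j-1}) - f(o^j) ≤ f(s^j) - f(s^{j-1}). -/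

import Mathlib

open Finset

/-- Join `⊔` on `(k+1)^E`, where a `k`-tuple of pairwise disjoint subsets of `E`
is represented as a function `E → Option (Fin k)`. -/
def ksup {E : Type*} {k : ℕ} (x y : E → Option (Fin k)) : E → Option (Fin k) :=
  fun e => match x e, y e with
  | none, b => b
  | some i, none => some i
  | some i, some j => if i = j then some i else none

/-- Meet `⊓` on `(k+1)^E`. -/
def kinf {E : Type*} {k : ℕ} (x y : E → Option (Fin k)) : E → Option (Fin k) :=
  fun e => match x e, y e with
  | some i, some j => if i = j then some i else none
  | _, _ => none

/-- The partial order `x ⪯ y` : `X_i ⊆ Y_i` for all `i`. -/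
def kle {E : Type*} {k : ℕ} (x y : E → Option (Fin k)) : Prop :=
  ∀ e i, x e = some i → y e = some i

/-- `I_{[e,i]}`: the `k`-tuple with `{e}` in coordinate `i` and `∅` elsewhere. -/
def ksingle {E : Type*} [DecidableEq E] {k : ℕ} (e : E) (i : Fin k) : E → Option (Fin k) :=
  fun e' => if e' = e then some i else none

/-- Marginal gain `Δ_{e,i} f(x) = f(x ⊔ I_{[e,i]}) - f(x)`. -/
def marg {E : Type*} [DecidableEq E] {k : ℕ} (f : (E → Option (Fin k)) → ℝ)
    (x : E → Option (Fin k)) (e : E) (i : Fin k) : ℝ :=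
  f (ksup x (ksingle e i)) - f x

/-- `f` is `k`-submodular: `f(x⊔y) + f(x⊓y) ≤ f(x) + f(y)`. -/
def KSubmodular {E : Type*} {k : ℕ} (f : (E → Option (Fin k)) → ℝ) : Prop :=
  ∀ x y, f (ksup x y) + f (kinf x y) ≤ f x + f y

/-- The support `P(x) = ⋃ᵢ Xᵢ` as a finset. -/
def suppK {E : Type*} [Fintype E] {k : ℕ} (x : E → Option (Fin k)) : Finset E :=
  Finset.univ.filter fun e => x e ≠ none

/-- Orthant submodularity. -/
def OrthantSubmodular {E : Type*} [DecidableEq E] {k : ℕ}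
    (f : (E → Option (Fin k)) → ℝ) : Prop :=
  ∀ x y, kle x y → ∀ e, y e = none → ∀ i, marg f y e i ≤ marg f x e i

/-- Pairwise monotonicity. -/
def PairwiseMonotone {E : Type*} [DecidableEq E] {k : ℕ}
    (f : (E → Option (Fin k)) → ℝ) : Prop :=
  ∀ x e, x e = none → ∀ i j : Fin k, i ≠ j → 0 ≤ marg f x e i + marg f x e j

/-- Monotonicity with respect to `⪯`. -/
def KMonotone {E : Type*} {k : ℕ} (f : (E → Option (Fin k)) → ℝ) : Prop :=
  ∀ x y, kle x y → f x ≤ f y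

/-
Write `a = o^{j-1}`, `x = s^{j-1}`, `e = e^j`, `i = i^j`. Then `o^j` is `a` with coordinate `e`
overwritten by `i`, and `f(s^j) - f(s^{j-1}) = Δ_{e,i} f(x) ≥ 0`. If `a` has `e` in no part or in
part `i`, then `a ⪯ o^j` and monotonicity gives `f(a) ≤ f(o^j)`. Otherwise `e` lies in part
`i' ≠ i` of `a`; with `b` the tuple `a` with `e` removed, `x ⪯ b` and
`f(a) - f(o^j) = Δ_{e,i'} f(b) - Δ_{e,i} f(b) ≤ Δ_{e,i'} f(b) ≤ Δ_{e,i'} f(x) ≤ Δ_{e,i} f(x)`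
by monotonicity, orthant submodularity and greediness.
-/

open Function

lemma eq_none_of_kle {E : Type*} {k : ℕ} {x y : E → Option (Fin k)} {e : E} (hxy : kle x y)
    (hy : y e = none) : x e = none := by
  cases hx : x e with
  | none => rfl
  | some j => simp [hxy e j hx] at hy

section KSingle

variable {E : Type*} [DecidableEq E] {k : ℕ} {x : E → Option (Fin k)} {e : E} {i j : Fin k}

lemma ksup_ksingle_of_eq_none (hx : x e = none) :
    ksup x (ksingle e i) = update x e (some i) := by
  funext e'
  by_cases h : e' = e
  · subst h; simp [ksup, ksingle, hx]
  · simp only [ksup, ksingle, h, if_false, update_of_ne h]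
    cases x e' <;> rfl

lemma ksup_ksingle_of_eq_some_of_ne (hx : x e = some j) (hji : j ≠ i) :
    ksup x (ksingle e i) = update x e none := by
  funext e'
  by_cases h : e' = e
  · subst h; simp [ksup, ksingle, hx, hji]
  · simp only [ksup, ksingle, h, if_false, update_of_ne h]
    cases x e' <;> rfl

lemma ksup_ksup_ksingle_ksingle :
    ksup (ksup x (ksingle e i)) (ksingle e i) = update x e (some i) := by
  funext e'
  by_cases h : e' = e
  · subst h
    simp only [ksup, ksingle, if_true, update_self]
    rcases x e' with _ | j
    · simp
    · by_cases hji : j = i <;> simp [hji]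
  · simp only [ksup, ksingle, h, if_false, update_of_ne h]
    cases x e' <;> rfl

lemma kle_update_some (hx : x e = none ∨ x e = some i) : kle x (update x e (some i)) := by
  intro e' j' hj'
  by_cases h : e' = e
  · subst h
    rcases hx with hx | hx <;> rw [hx] at hj' <;> simp_all
  · rwa [update_of_ne h]

end KSingle

section KSubmodular

variable {E : Type*} [DecidableEq E] {k : ℕ} {f : (E → Option (Fin k)) → ℝ}

lemma KMonotone.marg_nonneg (hmono : KMonotone f) {x : E → Option (Fin k)} {e : E}
    (hx : x e = none) (i : Fin k) : 0 ≤ marg f x e i := by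
  have := hmono x _ (ksup_ksingle_of_eq_none (i := i) hx ▸ kle_update_some (.inl hx))
  unfold marg
  linarith

lemma KSubmodular.orthantSubmodular (hf : KSubmodular f) : OrthantSubmodular f := by
  intro x y hxy e hy i
  have hx := eq_none_of_kle hxy hy
  have hsup : ksup (update x e (some i)) y = update y e (some i) := by
    funext e'
    by_cases h : e' = e
    · subst h; simp [ksup, hy]
    · simp only [ksup, update_of_ne h]
      cases hx' : x e' with
      | none => rfl
      | some j => simp [hxy e' j hx']
  have hinf : kinf (update x e (some i)) y = x := by
    funext e'
    by_cases h : e' = e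
    · subst h; simp [kinf, hy, hx]
    · simp only [kinf, update_of_ne h]
      cases hx' : x e' with
      | none => rfl
      | some j => simp [hxy e' j hx']
  have := hf (update x e (some i)) y
  rw [hsup, hinf] at this
  simp only [marg, ksup_ksingle_of_eq_none hx, ksup_ksingle_of_eq_none hy]
  linarith

lemma KSubmodular.sub_update_le_marg (hf : KSubmodular f) (hmono : KMonotone f)
    {x y : E → Option (Fin k)} {e : E} {i i' : Fin k} (hy : y e = some i')
    (hxy : kle x (update y e none)) (hgreedy : marg f x e i' ≤ marg f x e i) :
    f y - f (update y e (some i)) ≤ marg f x e i := by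
  set b := update y e none
  have hb : b e = none := update_self e none y
  have hy_eq : y = ksup b (ksingle e i') := by
    rw [ksup_ksingle_of_eq_none hb, update_idem, ← hy, update_eq_self]
  have hupd : update y e (some i) = ksup b (ksingle e i) := by
    rw [ksup_ksingle_of_eq_none hb, update_idem]
  have hgain := hmono.marg_nonneg hb i
  have horth := hf.orthantSubmodular x b hxy e hb i'
  have hdiff : f y - f (update y e (some i)) = marg f b e i' - marg f b e i := by
    rw [hupd]; conv_lhs => rw [hy_eq]
    simp only [marg]; ring
  linarith

end KSubmodular

theorem stmt_12_general {E : Type*} [DecidableEq E] {k p : ℕ}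
    (f : (E → Option (Fin k)) → ℝ) (hf : KSubmodular f) (hmono : KMonotone f)
    (s o : ℕ → (E → Option (Fin k))) (e : ℕ → E) (idx : ℕ → Fin k)
    (hnew : ∀ j, 1 ≤ j → j ≤ p → s (j - 1) (e j) = none)
    (hs : ∀ j, 1 ≤ j → j ≤ p → s j = ksup (s (j - 1)) (ksingle (e j) (idx j)))
    (ho : ∀ j, 1 ≤ j → j ≤ p → o j =
      ksup (ksup (o (j - 1)) (ksingle (e j) (idx j))) (ksingle (e j) (idx j)))
    (hle1 : ∀ j, 1 ≤ j → j ≤ p →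
      kle (s (j - 1)) (ksup (o (j - 1)) (ksingle (e j) (idx j))))
    (hgreedy : ∀ j, 1 ≤ j → j ≤ p →
      ∀ i : Fin k, marg f (s (j - 1)) (e j) i ≤ marg f (s (j - 1)) (e j) (idx j)) :
    ∀ j, 1 ≤ j → j ≤ p → f (o (j - 1)) - f (o j) ≤ f (s j) - f (s (j - 1)) := by
  intro j hj hjp
  have hgain : f (s j) - f (s (j - 1)) = marg f (s (j - 1)) (e j) (idx j) := by
    rw [hs j hj hjp, marg]
  rw [hgain, ho j hj hjp, ksup_ksup_ksingle_ksingle]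
  by_cases hkeep : o (j - 1) (e j) = none ∨ o (j - 1) (e j) = some (idx j)
  · have hle := hmono _ _ (kle_update_some hkeep)
    have := hmono.marg_nonneg (hnew j hj hjp) (idx j)
    linarith
  · obtain ⟨i', hi'⟩ := Option.ne_none_iff_exists'.mp (not_or.mp hkeep).1
    have hne : i' ≠ idx j := fun h => (not_or.mp hkeep).2 (h ▸ hi')
    have hle := hle1 j hj hjp
    rw [ksup_ksingle_of_eq_some_of_ne hi' hne] at hle
    exact hf.sub_update_le_marg hmono hi' hle (hgreedy j hj hjp i')

theorem stmt_12 {E : Type*} [Fintype E] [DecidableEq E] {k p : ℕ} (hk : 0 < k)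
    (f : (E → Option (Fin k)) → ℝ) (hf : KSubmodular f) (hmono : KMonotone f)
    (hnn : ∀ x, 0 ≤ f x)
    (s o : ℕ → (E → Option (Fin k))) (e : ℕ → E) (idx : ℕ → Fin k)
    (hnew : ∀ j, 1 ≤ j → j ≤ p → s (j - 1) (e j) = none)
    (hs : ∀ j, 1 ≤ j → j ≤ p → s j = ksup (s (j - 1)) (ksingle (e j) (idx j)))
    (ho : ∀ j, 1 ≤ j → j ≤ p → o j =
      ksup (ksup (o (j - 1)) (ksingle (e j) (idx j))) (ksingle (e j) (idx j)))
    (hle1 : ∀ j, 1 ≤ j → j ≤ p →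
      kle (s (j - 1)) (ksup (o (j - 1)) (ksingle (e j) (idx j))))
    (hle2 : ∀ j, 1 ≤ j → j ≤ p → kle (s (j - 1)) (o (j - 1)))
    (hgreedy : ∀ j, 1 ≤ j → j ≤ p →
      ∀ i : Fin k, marg f (s (j - 1)) (e j) i ≤ marg f (s (j - 1)) (e j) (idx j)) :
    ∀ j, 1 ≤ j → j ≤ p → f (o (j - 1)) - f (o j) ≤ f (s j) - f (s (j - 1)) :=
  stmt_12_general f hf hmono s o e idx hnew hs ho hle1 hgreedy
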